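/- Let 𝒯 be a chain (under inclusion) of nonempty subsets of T, let Ω be finite, and suppose that for all ω, ω′ ∈ Ω the set H̄(ω,ω′) := ⋃{H ∈ 𝒯 : ω|_H = ω′|_H} itself belongs to {H ∈ 𝒯 : ω|_H = ω′|_H}. Then 𝒯_Ω := {H̄(ω,ω′) : ω, ω′ ∈ Ω} is a finite chain {H̄_1 ⊆ ⋯ ⊆ H̄_k} in 𝒯, and for every multifunction α: N_𝒯(α) = N_{𝒯_Ω}(α), and the ⊑-greatest element of N_𝒯(α) exists and equals the superposition Γ_{H̄_1}(Γ_{H̄_2}(⋯ Γ_{H̄_k}(α) ⋯)). -/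

import Mathlib

open Set

/-- Restriction of a set `F` of functions (elements of `Z`) to the set `A ⊆ T`:
`F|_A = {f|_A : f ∈ F}`. -/
def resSet {T X : Type*} {Z : Set (T → X)} (A : Set T) (F : Set ↥Z) : Set (↥A → X) :=
  (fun h : ↥Z => A.restrict (h : T → X)) '' F

/-- A multifunction `z : Ω → 𝒫(Z)` is `A`-non-anticipative if `ω|_A = ω'|_A` implies
`z(ω)|_A = z(ω')|_A`. -/
def NonAnt {T X Y : Type*} (Ω : Set (T → Y)) (Z : Set (T → X)) (A : Set T)
    (z : ↥Ω → Set ↥Z) : Prop :=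
  ∀ ω ω' : ↥Ω, A.restrict (ω : T → Y) = A.restrict (ω' : T → Y) →
    resSet A (z ω) = resSet A (z ω')

/-- `N_ℋ(α)`: the set of `ℋ`-non-anticipative multiselectors of `α`. -/
def Nna {T X Y : Type*} (Ω : Set (T → Y)) (Z : Set (T → X)) (ℋ : Set (Set T))
    (α : ↥Ω → Set ↥Z) : Set (↥Ω → Set ↥Z) :=
  {z | (∀ A ∈ ℋ, NonAnt Ω Z A z) ∧ ∀ ω, z ω ⊆ α ω}

/-- `N°_ℋ(α)`: the set of nonempty-valued `ℋ`-non-anticipative multiselectors of `α`. -/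
def NnaNE {T X Y : Type*} (Ω : Set (T → Y)) (Z : Set (T → X)) (ℋ : Set (Set T))
    (α : ↥Ω → Set ↥Z) : Set (↥Ω → Set ↥Z) :=
  {z ∈ Nna Ω Z ℋ α | ∀ ω, (z ω).Nonempty}

/-- The operator `Γ_A`:
`Γ_A(α)(ω) = {h ∈ α(ω) : h|_A ∈ ⋂_{ω' ∈ Ω, ω'|_A = ω|_A} α(ω')|_A}`. -/
def Gamma {T X Y : Type*} (Ω : Set (T → Y)) (Z : Set (T → X)) (A : Set T)
    (α : ↥Ω → Set ↥Z) : ↥Ω → Set ↥Z :=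
  fun ω => {h ∈ α ω |
    A.restrict (h : T → X) ∈
      ⋂ ω' ∈ {η : ↥Ω | A.restrict (η : T → Y) = A.restrict (ω : T → Y)}, resSet A (α ω')}

/-!
`B`-non-anticipativity forces `z(ω)|_A = z(ω')|_A` whenever `ω` and `ω'` agree on some
`B ⊇ A`. Since `H̄(ω, ω')` is the largest member of `𝒯` on which `ω` and `ω'` agree,
non-anticipativity along `𝒯` reduces to non-anticipativity along the finitely many sets
`H̄(ω, ω')`, which form a finite chain `H̄₁ ⊆ ⋯ ⊆ H̄ₖ`.

`Γ_A β` is the largest `A`-non-anticipative multiselector of `β`, and for `A ⊆ B` the operator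
`Γ_A` preserves `B`-non-anticipativity. Applying `Γ_{H̄ₖ}` first and `Γ_{H̄₁}` last therefore
keeps every non-anticipativity already gained, and the superposition is the greatest element.
-/

theorem IsChain.exists_list_pairwise {α : Type*} {r : α → α → Prop} [Std.Refl r] [IsTrans α r]
    {s : Set α} (hs : s.Finite) (hc : IsChain r s) :
    ∃ l : List α, {x | x ∈ l} = s ∧ l.Pairwise r := by
  classical
  let le : ↥s → ↥s → Bool := fun a b => decide (r a b)
  have htrans : ∀ a b c, le a b → le b c → le a c := by
    simp only [le, decide_eq_true_eq]
    exact fun a b c => trans_of r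
  have htotal : ∀ a b, le a b || le b a := by
    intro a b
    by_cases hab : a = b
    · simp [le, hab, refl_of r]
    · simpa [le] using hc a.2 b.2 (Subtype.coe_ne_coe.2 hab)
  let elems : List ↥s := hs.toFinset.toList.attach.map fun x => ⟨x.1, by simpa using x.2⟩
  refine ⟨(elems.mergeSort le).map Subtype.val, by ext; simp [elems], ?_⟩
  exact List.pairwise_map.2 ((List.pairwise_mergeSort htrans htotal _).imp (by simp [le]))

section Restriction

variable {T X : Type*}

theorem restrict_eq_of_subset {A B : Set T} (hAB : A ⊆ B) {f g : T → X}
    (h : B.restrict f = B.restrict g) : A.restrict f = A.restrict g :=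
  funext fun a => congrFun h ⟨a, hAB a.2⟩

theorem resSet_eq_of_subset {Z : Set (T → X)} {A B : Set T} (hAB : A ⊆ B) {F G : Set ↥Z}
    (h : resSet B F = resSet B G) : resSet A F = resSet A G := by
  have key : ∀ H : Set ↥Z,
      resSet A H = (fun g : ↥B → X => fun a : ↥A => g ⟨a, hAB a.2⟩) '' resSet B H :=
    fun H => by rw [resSet, resSet, image_image]; rfl
  rw [key F, key G, h]

end Restriction

section Gamma

variable {T X Y : Type*} (Ω : Set (T → Y)) (Z : Set (T → X))

theorem Gamma_subset (A : Set T) (β : ↥Ω → Set ↥Z) (ω : ↥Ω) : Gamma Ω Z A β ω ⊆ β ω :=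
  fun _ h => h.1

theorem resSet_Gamma (A : Set T) (β : ↥Ω → Set ↥Z) (ω : ↥Ω) :
    resSet A (Gamma Ω Z A β ω) =
      ⋂ ω' ∈ {η : ↥Ω | A.restrict (η : T → Y) = A.restrict (ω : T → Y)}, resSet A (β ω') := by
  refine Subset.antisymm (fun _ ⟨_, ⟨_, hh⟩, hg⟩ => hg ▸ hh) fun g hg => ?_
  obtain ⟨h, hh, rfl⟩ := mem_iInter₂.1 hg ω rfl
  exact ⟨h, ⟨hh, hg⟩, rfl⟩

theorem nonAnt_Gamma (A : Set T) (β : ↥Ω → Set ↥Z) : NonAnt Ω Z A (Gamma Ω Z A β) := by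
  intro ω ω' hωω'
  simp only [resSet_Gamma, hωω']

theorem NonAnt.Gamma_of_subset {A B : Set T} (hAB : A ⊆ B) {β : ↥Ω → Set ↥Z}
    (hβ : NonAnt Ω Z B β) : NonAnt Ω Z B (Gamma Ω Z A β) := by
  suffices key : ∀ ω ω' : ↥Ω, B.restrict (ω : T → Y) = B.restrict (ω' : T → Y) →
      resSet B (Gamma Ω Z A β ω) ⊆ resSet B (Gamma Ω Z A β ω') from
    fun ω ω' hB => (key ω ω' hB).antisymm (key ω' ω hB.symm)
  rintro ω ω' hB _ ⟨h, ⟨hhβ, hhA⟩, rfl⟩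
  obtain ⟨h', hh', hres⟩ : B.restrict (h : T → X) ∈ resSet B (β ω') :=
    hβ ω ω' hB ▸ ⟨h, hhβ, rfl⟩
  refine ⟨h', ⟨hh', ?_⟩, hres⟩
  rwa [restrict_eq_of_subset hAB hres, restrict_eq_of_subset hAB hB.symm]

theorem subset_Gamma (A : Set T) {z β : ↥Ω → Set ↥Z} (hz : NonAnt Ω Z A z)
    (hzβ : ∀ ω, z ω ⊆ β ω) (ω : ↥Ω) : z ω ⊆ Gamma Ω Z A β ω := by
  refine fun h hh => ⟨hzβ ω hh, mem_iInter₂.2 fun η hη => ?_⟩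
  obtain ⟨h', hh', hres⟩ : A.restrict (h : T → X) ∈ resSet A (z η) :=
    hz ω η hη.symm ▸ ⟨h, hh, rfl⟩
  exact ⟨h', hzβ η hh', hres⟩

variable {Ω Z}

theorem foldr_Gamma_mem_Nna {l : List (Set T)} (hl : l.Pairwise (· ⊆ ·))
    (α : ↥Ω → Set ↥Z) : l.foldr (Gamma Ω Z) α ∈ Nna Ω Z {A | A ∈ l} α := by
  induction l with
  | nil => exact ⟨fun _ h => absurd h List.not_mem_nil, fun _ => Subset.rfl⟩
  | cons B l ih =>
    obtain ⟨hB, hl⟩ := List.pairwise_cons.1 hl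
    obtain ⟨ihna, ihsub⟩ := ih hl
    refine ⟨fun A hA => ?_, fun ω => (Gamma_subset Ω Z B _ ω).trans (ihsub ω)⟩
    rcases List.mem_cons.1 hA with rfl | hA
    · exact nonAnt_Gamma Ω Z A _
    · exact (ihna A hA).Gamma_of_subset Ω Z (hB A hA)

theorem le_foldr_Gamma_of_mem_Nna {l : List (Set T)} {α β : ↥Ω → Set ↥Z}
    (hβ : β ∈ Nna Ω Z {A | A ∈ l} α) (ω : ↥Ω) : β ω ⊆ l.foldr (Gamma Ω Z) α ω := by
  induction l generalizing ω with
  | nil => exact hβ.2 ω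
  | cons A l ih =>
    refine subset_Gamma Ω Z A (hβ.1 A List.mem_cons_self) (fun ω => ih ?_ ω) ω
    exact ⟨fun B hB => hβ.1 B (List.mem_cons_of_mem A hB), hβ.2⟩

theorem Nna_eq_of_subset_of_exists_superset {ℋ ℋ' : Set (Set T)} (hℋ' : ℋ' ⊆ ℋ)
    (hsup : ∀ A ∈ ℋ, ∀ ω ω' : ↥Ω, A.restrict (ω : T → Y) = A.restrict (ω' : T → Y) →
      ∃ B ∈ ℋ', A ⊆ B ∧ B.restrict (ω : T → Y) = B.restrict (ω' : T → Y))
    (α : ↥Ω → Set ↥Z) : Nna Ω Z ℋ α = Nna Ω Z ℋ' α := by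
  refine Subset.antisymm (fun z hz => ⟨fun A hA => hz.1 A (hℋ' hA), hz.2⟩) fun z hz => ?_
  refine ⟨fun A hA ω ω' hA' => ?_, hz.2⟩
  obtain ⟨B, hB, hAB, hB'⟩ := hsup A hA ω ω' hA'
  exact resSet_eq_of_subset hAB (hz.1 B hB ω ω' hB')

end Gamma

theorem stmt12_general {T X Y : Type*}
    (Ω : Set (T → Y)) (Z : Set (T → X))
    (hΩfin : Ω.Finite)
    (𝒯 : Set (Set T)) (h𝒯chain : IsChain (· ⊆ ·) 𝒯)
    (hstmb : ∀ ω ω' : ↥Ω,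
        ⋃₀ {H ∈ 𝒯 | H.restrict (ω : T → Y) = H.restrict (ω' : T → Y)} ∈
          {H ∈ 𝒯 | H.restrict (ω : T → Y) = H.restrict (ω' : T → Y)})
    (α : ↥Ω → Set ↥Z) :
    ∃ (k : ℕ) (Hbar : Fin k → Set T),
      (∀ i j : Fin k, i ≤ j → Hbar i ⊆ Hbar j) ∧
      Set.range Hbar =
        {S : Set T | ∃ ω ω' : ↥Ω,
          S = ⋃₀ {H ∈ 𝒯 | H.restrict (ω : T → Y) = H.restrict (ω' : T → Y)}} ∧
      Set.range Hbar ⊆ 𝒯 ∧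
      Nna Ω Z 𝒯 α = Nna Ω Z (Set.range Hbar) α ∧
      (List.ofFn Hbar).foldr (Gamma Ω Z) α ∈ Nna Ω Z 𝒯 α ∧
      ∀ β ∈ Nna Ω Z 𝒯 α, ∀ ω : ↥Ω, β ω ⊆ (List.ofFn Hbar).foldr (Gamma Ω Z) α ω := by
  set Hbar : ↥Ω → ↥Ω → Set T :=
    fun ω ω' => ⋃₀ {H ∈ 𝒯 | H.restrict (ω : T → Y) = H.restrict (ω' : T → Y)}
  set 𝒯Ω : Set (Set T) := {S | ∃ ω ω' : ↥Ω, S = Hbar ω ω'}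
  have h𝒯Ω : 𝒯Ω ⊆ 𝒯 := by
    rintro _ ⟨ω, ω', rfl⟩
    exact (hstmb ω ω').1
  have hfin : 𝒯Ω.Finite := by
    have := hΩfin.to_subtype
    exact (finite_range fun p : ↥Ω × ↥Ω => Hbar p.1 p.2).subset
      fun _ ⟨ω, ω', hS⟩ => ⟨(ω, ω'), hS.symm⟩
  obtain ⟨l, hl, hsorted⟩ := (h𝒯chain.mono h𝒯Ω).exists_list_pairwise hfin
  have hrange : range l.get = 𝒯Ω := by
    rw [← hl]
    ext A
    exact List.mem_iff_get.symm
  have hNna : Nna Ω Z 𝒯 α = Nna Ω Z 𝒯Ω α :=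
    Nna_eq_of_subset_of_exists_superset h𝒯Ω (fun A hA ω ω' hA' =>
      ⟨Hbar ω ω', ⟨ω, ω', rfl⟩, subset_sUnion_of_mem ⟨hA, hA'⟩, (hstmb ω ω').2⟩) α
  refine ⟨l.length, l.get, fun i j hij => hsorted.rel_get_of_le hij, hrange, hrange ▸ h𝒯Ω,
    hrange ▸ hNna, ?_, fun β hβ => ?_⟩
  · rw [List.ofFn_get, hNna, ← hl]
    exact foldr_Gamma_mem_Nna hsorted α
  · rw [hNna, ← hl] at hβ
    rw [List.ofFn_get]
    exact le_foldr_Gamma_of_mem_Nna hβ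

/-- Corollary `3netrudno`: Let `𝒯` be a chain of nonempty subsets of `T`, let
`Ω` be finite, and suppose each `H̄(ω,ω') = ⋃{H ∈ 𝒯 : ω|_H = ω'|_H}` itself belongs to
`{H ∈ 𝒯 : ω|_H = ω'|_H}`. Then `𝒯_Ω = {H̄(ω,ω') : ω, ω' ∈ Ω}` is a finite chain
`{H̄ 0 ⊆ ⋯ ⊆ H̄ (k-1)}` in `𝒯`, `N_𝒯(α) = N_{𝒯_Ω}(α)`, and the superposition
`Γ_{H̄ 0}(⋯ Γ_{H̄ (k-1)}(α) ⋯)` is the `⊑`-greatest element of `N_𝒯(α)`. -/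
theorem stmt12 {T X Y : Type*} [Nonempty T] [Nonempty X] [Nonempty Y]
    (Ω : Set (T → Y)) (Z : Set (T → X)) (hΩ : Ω.Nonempty) (hZ : Z.Nonempty)
    (hΩfin : Ω.Finite)
    (𝒯 : Set (Set T)) (h𝒯mem : ∀ A ∈ 𝒯, A.Nonempty) (h𝒯chain : IsChain (· ⊆ ·) 𝒯)
    (hstmb : ∀ ω ω' : ↥Ω,
        ⋃₀ {H ∈ 𝒯 | H.restrict (ω : T → Y) = H.restrict (ω' : T → Y)} ∈
          {H ∈ 𝒯 | H.restrict (ω : T → Y) = H.restrict (ω' : T → Y)})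
    (α : ↥Ω → Set ↥Z) :
    ∃ (k : ℕ) (Hbar : Fin k → Set T),
      (∀ i j : Fin k, i ≤ j → Hbar i ⊆ Hbar j) ∧
      Set.range Hbar =
        {S : Set T | ∃ ω ω' : ↥Ω,
          S = ⋃₀ {H ∈ 𝒯 | H.restrict (ω : T → Y) = H.restrict (ω' : T → Y)}} ∧
      Set.range Hbar ⊆ 𝒯 ∧
      Nna Ω Z 𝒯 α = Nna Ω Z (Set.range Hbar) α ∧
      (List.ofFn Hbar).foldr (Gamma Ω Z) α ∈ Nna Ω Z 𝒯 α ∧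
      ∀ β ∈ Nna Ω Z 𝒯 α, ∀ ω : ↥Ω, β ω ⊆ (List.ofFn Hbar).foldr (Gamma Ω Z) α ω :=
  stmt12_general Ω Z hΩfin 𝒯 h𝒯chain hstmb α
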